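/- arXiv:nlin/0606056 — 13 statements merged into one kernel-verified Lean document; each statement's English description precedes it below -/
import Mathlib

section
/- Let K be a field, a, b, c ∈ K parameters, and (x, y, z) ∈ K³ with cx + a ≠ 0 and x² + a ≠ 0. Define y₁ = (x²z − x + az + c)/(cx + a) and z₁ = (cxy + x + ay − c)/(x² + a). Then x + y₁ + z₁ − x·y₁·z₁ = x + y + z − xyz and z₁(x + a·y₁) + bx + c·y₁ = z(x + ay) + bx + cy. -/
section Invariants

variable {K : Type*} [Field K]

def invariantI (x y z : K) : K := x + y + z - x * y * z

def invariantJ (a b c x y z : K) : K := z * (x + a * y) + b * x + c * y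

variable {a c x : K} (y z : K)

theorem invariantI_R₁ (hy : c * x + a ≠ 0) (hz : x ^ 2 + a ≠ 0) :
    invariantI x ((x ^ 2 * z - x + a * z + c) / (c * x + a))
      ((c * x * y + x + a * y - c) / (x ^ 2 + a)) = invariantI x y z := by
  unfold invariantI
  -- `field_simp` normalizes the denominator `c * x + a` to this form
  have hy' : x * c + a ≠ 0 := mul_comm c x ▸ hy
  field_simp
  ring

theorem invariantJ_R₁ (b : K) (hy : c * x + a ≠ 0) (hz : x ^ 2 + a ≠ 0) :
    invariantJ a b c x ((x ^ 2 * z - x + a * z + c) / (c * x + a))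
      ((c * x * y + x + a * y - c) / (x ^ 2 + a)) = invariantJ a b c x y z := by
  unfold invariantJ
  have hy' : x * c + a ≠ 0 := mul_comm c x ▸ hy
  field_simp
  ring

end Invariants

/-- The map `R₁` of the polynomial-invariants example preserves both
invariants `I = x + y + z - xyz` and `J = z(x + ay) + bx + cy`. -/
theorem stmt_2 {K : Type*} [Field K] (a b c x y z : K)
    (h1 : c * x + a ≠ 0) (h2 : x ^ 2 + a ≠ 0) :
    let y1 := (x ^ 2 * z - x + a * z + c) / (c * x + a)
    let z1 := (c * x * y + x + a * y - c) / (x ^ 2 + a)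
    x + y1 + z1 - x * y1 * z1 = x + y + z - x * y * z ∧
    z1 * (x + a * y1) + b * x + c * y1 = z * (x + a * y) + b * x + c * y :=
  ⟨invariantI_R₁ y z h1 h2, invariantJ_R₁ y z b h1 h2⟩
end

section
/- Let K be a field, a, b, c ∈ K parameters, and (x, y, z) ∈ K³ with by + 1 ≠ 0 and ay² + 1 ≠ 0. Define x₂ = (ay²z − ay + z + b)/(by + 1) and z₂ = (bxy + x + ay − b)/(ay² + 1). Then x₂ + y + z₂ − x₂·y·z₂ = x + y + z − xyz and z₂(x₂ + ay) + b·x₂ + cy = z(x + ay) + bx + cy. -/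
section R₂

variable {K : Type*} [Field K] (a b c x y z : K)

def invI : K := x + y + z - x * y * z

def invJ : K := z * (x + a * y) + b * x + c * y

def r₂x : K := (a * y ^ 2 * z - a * y + z + b) / (b * y + 1)

def r₂z : K := (b * x * y + x + a * y - b) / (a * y ^ 2 + 1)

variable {a b x y z}

theorem invI_r₂ (hb : b * y + 1 ≠ 0) (ha : a * y ^ 2 + 1 ≠ 0) :
    invI (r₂x a b y z) y (r₂z a b x y) = invI x y z := by
  unfold invI r₂x r₂z
  -- `field_simp` looks for the nonvanishing of denominators in its own normal form `y * b + 1`.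
  have hb' : y * b + 1 ≠ 0 := by rwa [mul_comm]
  have ha' : y ^ 2 * a + 1 ≠ 0 := by rwa [mul_comm]
  field_simp
  ring

theorem invJ_r₂ (hb : b * y + 1 ≠ 0) (ha : a * y ^ 2 + 1 ≠ 0) :
    invJ a b c (r₂x a b y z) y (r₂z a b x y) = invJ a b c x y z := by
  unfold invJ r₂x r₂z
  have hb' : y * b + 1 ≠ 0 := by rwa [mul_comm]
  have ha' : y ^ 2 * a + 1 ≠ 0 := by rwa [mul_comm]
  field_simp
  ring

end R₂

/-- The map `R₂` of the polynomial-invariants example preserves both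
invariants `I = x + y + z - xyz` and `J = z(x + ay) + bx + cy`. -/
theorem stmt_3 {K : Type*} [Field K] (a b c x y z : K)
    (h1 : b * y + 1 ≠ 0) (h2 : a * y ^ 2 + 1 ≠ 0) :
    let x2 := (a * y ^ 2 * z - a * y + z + b) / (b * y + 1)
    let z2 := (b * x * y + x + a * y - b) / (a * y ^ 2 + 1)
    x2 + y + z2 - x2 * y * z2 = x + y + z - x * y * z ∧
    z2 * (x2 + a * y) + b * x2 + c * y = z * (x + a * y) + b * x + c * y :=
  ⟨invI_r₂ h1 h2, invJ_r₂ c h1 h2⟩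
end

section
/- Let K be a field, a, b, c ∈ K parameters, and (x, y, z) ∈ K³ with z ≠ 0, z + b ≠ 0 and az + c ≠ 0. Define x₃ = (ayz² + cyz + (1 − a)z + b − c)/(z(z + b)) and y₃ = (xz² + bxz + (a − 1)z + c − b)/(z(az + c)). Then x₃ + y₃ + z − x₃·y₃·z = x + y + z − xyz and z(x₃ + a·y₃) + b·x₃ + c·y₃ = z(x + ay) + bx + cy. -/
namespace R3

variable {K : Type*} [Field K] (a b c x y z : K)

def invI : K := x + y + z - x * y * z

def invJ : K := z * (x + a * y) + b * x + c * y

def newX : K := (a * y * z ^ 2 + c * y * z + (1 - a) * z + b - c) / (z * (z + b))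

def newY : K := (x * z ^ 2 + b * x * z + (a - 1) * z + c - b) / (z * (a * z + c))

variable {a b c x y z}

theorem invJ_eq_add_mul : invJ a b c x y z = x * (z + b) + y * (a * z + c) := by
  unfold invJ; ring

theorem newX_mul (h0 : z ≠ 0) (h1 : z + b ≠ 0) :
    newX a b c y z * (z + b) = y * (a * z + c) + ((1 - a) * z + b - c) / z := by
  unfold newX; field_simp; ring

theorem newY_mul (h0 : z ≠ 0) (h2 : a * z + c ≠ 0) :
    newY a b c x z * (a * z + c) = x * (z + b) + ((a - 1) * z + c - b) / z := by
  have h2' : z * a + c ≠ 0 := by rwa [mul_comm]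
  unfold newY
  field_simp
  ring

theorem invJ_newX_newY (h0 : z ≠ 0) (h1 : z + b ≠ 0) (h2 : a * z + c ≠ 0) :
    invJ a b c (newX a b c y z) (newY a b c x z) z = invJ a b c x y z := by
  rw [invJ_eq_add_mul, invJ_eq_add_mul, newX_mul h0 h1, newY_mul h0 h2]
  ring

theorem invI_newX_newY (h0 : z ≠ 0) (h1 : z + b ≠ 0) (h2 : a * z + c ≠ 0) :
    invI (newX a b c y z) (newY a b c x z) z = invI x y z := by
  have h2' : z * a + c ≠ 0 := by rwa [mul_comm]
  unfold invI newX newY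
  field_simp
  ring

end R3

open R3 in
/-- The map `R₃` of the polynomial-invariants example preserves both
invariants `I = x + y + z - xyz` and `J = z(x + ay) + bx + cy`. -/
theorem stmt_4 {K : Type*} [Field K] (a b c x y z : K)
    (h0 : z ≠ 0) (h1 : z + b ≠ 0) (h2 : a * z + c ≠ 0) :
    let x3 := (a * y * z ^ 2 + c * y * z + (1 - a) * z + b - c) / (z * (z + b))
    let y3 := (x * z ^ 2 + b * x * z + (a - 1) * z + c - b) / (z * (a * z + c))
    x3 + y3 + z - x3 * y3 * z = x + y + z - x * y * z ∧
    z * (x3 + a * y3) + b * x3 + c * y3 = z * (x + a * y) + b * x + c * y :=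
  ⟨invI_newX_newY h0 h1 h2, invJ_newX_newY h0 h1 h2⟩
end

section
/- Let K be a field, a, b, c ∈ K parameters, and (x, y, z) ∈ K³ with cx + a ≠ 0 and x² + a ≠ 0. Define y₁ = (x²z − x + az + c)/(cx + a) and z₁ = (cxy + x + ay − c)/(x² + a). Then (x²z₁ − x + a·z₁ + c)/(cx + a) = y and (cx·y₁ + x + a·y₁ − c)/(x² + a) = z; that is, applying the map R₁ twice returns the original point. -/
/-! With `A = x² + a`, `C = c x + a` and `d = x - c`, the map `R₁` reads
`(y, z) ↦ ((A z - d) / C, (C y + d) / A)`, and each coordinate of `R₁²` undoes the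
affine change made by the other. -/

theorem affine_swap_involutive {K : Type*} [Field K] {A C : K} (hA : A ≠ 0) (hC : C ≠ 0)
    (d y z : K) :
    (A * ((C * y + d) / A) - d) / C = y ∧ (C * ((A * z - d) / C) + d) / A = z := by
  constructor
  · rw [mul_div_cancel₀ _ hA, add_sub_cancel_right, mul_div_cancel_left₀ _ hC]
  · rw [mul_div_cancel₀ _ hC, sub_add_cancel, mul_div_cancel_left₀ _ hA]

theorem stmt_5_general {K : Type*} [Field K] (a c x y z : K)
    (h1 : c * x + a ≠ 0) (h2 : x ^ 2 + a ≠ 0) :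
    let y1 := (x ^ 2 * z - x + a * z + c) / (c * x + a)
    let z1 := (c * x * y + x + a * y - c) / (x ^ 2 + a)
    (x ^ 2 * z1 - x + a * z1 + c) / (c * x + a) = y ∧
    (c * x * y1 + x + a * y1 - c) / (x ^ 2 + a) = z := by
  have key := affine_swap_involutive h2 h1 (x - c) y z
  intro y1 z1
  convert key using 2 <;> ring

/-- The map `R₁` of the polynomial-invariants example is an involution. -/
theorem stmt_5 {K : Type*} [Field K] (a b c x y z : K)
    (h1 : c * x + a ≠ 0) (h2 : x ^ 2 + a ≠ 0) :
    let y1 := (x ^ 2 * z - x + a * z + c) / (c * x + a)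
    let z1 := (c * x * y + x + a * y - c) / (x ^ 2 + a)
    (x ^ 2 * z1 - x + a * z1 + c) / (c * x + a) = y ∧
    (c * x * y1 + x + a * y1 - c) / (x ^ 2 + a) = z :=
  stmt_5_general a c x y z h1 h2
end

section
/- Let K be a field, a, b, c ∈ K parameters, and (x, y, z) ∈ K³ with by + 1 ≠ 0 and ay² + 1 ≠ 0. Define x₂ = (ay²z − ay + z + b)/(by + 1) and z₂ = (bxy + x + ay − b)/(ay² + 1). Then (ay²·z₂ − ay + z₂ + b)/(by + 1) = x and (b·x₂·y + x₂ + ay − b)/(ay² + 1) = z; that is, applying the map R₂ twice returns the original point. -/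
/- Both coordinates of `R₂` are solved from the one linear relation
`(b y + 1) X - (a y² + 1) Z = b - a y`: `x₂` from the pair `(X, Z) = (x₂, z)` and `z₂` from
`(X, Z) = (x, z₂)`. Solving it back for the other unknown returns the original coordinate. -/
theorem stmt_6_general {K : Type*} [Field K] (a b x y z : K)
    (h1 : b * y + 1 ≠ 0) (h2 : a * y ^ 2 + 1 ≠ 0) :
    let x2 := (a * y ^ 2 * z - a * y + z + b) / (b * y + 1)
    let z2 := (b * x * y + x + a * y - b) / (a * y ^ 2 + 1)
    (a * y ^ 2 * z2 - a * y + z2 + b) / (b * y + 1) = x ∧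
    (b * x2 * y + x2 + a * y - b) / (a * y ^ 2 + 1) = z := by
  intro x2 z2
  have hx2 : (b * y + 1) * x2 = a * y ^ 2 * z - a * y + z + b := mul_div_cancel₀ _ h1
  have hz2 : (a * y ^ 2 + 1) * z2 = b * x * y + x + a * y - b := mul_div_cancel₀ _ h2
  constructor
  · rw [div_eq_iff h1]
    linear_combination hz2
  · rw [div_eq_iff h2]
    linear_combination hx2

/-- The map `R₂` of the polynomial-invariants example is an involution. -/
theorem stmt_6 {K : Type*} [Field K] (a b c x y z : K)
    (h1 : b * y + 1 ≠ 0) (h2 : a * y ^ 2 + 1 ≠ 0) :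
    let x2 := (a * y ^ 2 * z - a * y + z + b) / (b * y + 1)
    let z2 := (b * x * y + x + a * y - b) / (a * y ^ 2 + 1)
    (a * y ^ 2 * z2 - a * y + z2 + b) / (b * y + 1) = x ∧
    (b * x2 * y + x2 + a * y - b) / (a * y ^ 2 + 1) = z :=
  stmt_6_general a b x y z h1 h2
end

section
/- Let K be a field, a, b, c ∈ K parameters, and (x, y, z) ∈ K³ with z ≠ 0, z + b ≠ 0 and az + c ≠ 0. Define x₃ = (ayz² + cyz + (1 − a)z + b − c)/(z(z + b)) and y₃ = (xz² + bxz + (a − 1)z + c − b)/(z(az + c)). Then (a·y₃·z² + c·y₃·z + (1 − a)z + b − c)/(z(z + b)) = x and (x₃·z² + b·x₃·z + (a − 1)z + c − b)/(z(az + c)) = y; that is, applying the map R₃ twice returns the original point. -/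
/-- The map `R₃` of the polynomial-invariants example is an involution. -/
theorem stmt_7 {K : Type*} [Field K] (a b c x y z : K)
    (h0 : z ≠ 0) (h1 : z + b ≠ 0) (h2 : a * z + c ≠ 0) :
    let x3 := (a * y * z ^ 2 + c * y * z + (1 - a) * z + b - c) / (z * (z + b))
    let y3 := (x * z ^ 2 + b * x * z + (a - 1) * z + c - b) / (z * (a * z + c))
    (a * y3 * z ^ 2 + c * y3 * z + (1 - a) * z + b - c) / (z * (z + b)) = x ∧
    (x3 * z ^ 2 + b * x3 * z + (a - 1) * z + c - b) / (z * (a * z + c)) = y := by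
  intro x3 y3
  have h3 : z * (z + b) ≠ 0 := mul_ne_zero h0 h1
  have h4 : z * (a * z + c) ≠ 0 := mul_ne_zero h0 h2
  constructor
  · show (a * ((x * z ^ 2 + b * x * z + (a - 1) * z + c - b) / (z * (a * z + c))) * z ^ 2 +
        c * ((x * z ^ 2 + b * x * z + (a - 1) * z + c - b) / (z * (a * z + c))) * z +
        (1 - a) * z + b - c) / (z * (z + b)) = x
    field_simp
    ring
  · show ((a * y * z ^ 2 + c * y * z + (1 - a) * z + b - c) / (z * (z + b)) * z ^ 2 +
        b * ((a * y * z ^ 2 + c * y * z + (1 - a) * z + b - c) / (z * (z + b))) * z +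
        (a - 1) * z + c - b) / (z * (a * z + c)) = y
    field_simp
    ring
end

section
/- Let K be a field (or commutative ring) and let (xₙ)ₙ∈ℕ be a sequence in K satisfying (x_{n+3} + x_{n+2})·x_{n+2} = x_{n+1}·(x_{n+1} + x_n) for all n. Then the quantities Iₙ = x_{n+1}(x_{n+2} + x_{n+1} + x_n) and Jₙ = (x_{n+2} + x_{n+1})·x_{n+1}·(x_{n+1} + x_n) are independent of n: I_{n+1} = Iₙ and J_{n+1} = Jₙ for all n. -/
/-- For any sequence satisfying the third-order difference equation
`(x_{n+3} + x_{n+2}) x_{n+2} = x_{n+1}(x_{n+1} + x_n)`, the quantities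
`Iₙ = x_{n+1}(x_{n+2} + x_{n+1} + x_n)` and
`Jₙ = (x_{n+2} + x_{n+1}) x_{n+1} (x_{n+1} + x_n)` are independent of `n`. -/
theorem stmt_12 {K : Type*} [CommRing K] (x : ℕ → K)
    (h : ∀ n, (x (n + 3) + x (n + 2)) * x (n + 2) = x (n + 1) * (x (n + 1) + x n)) :
    ∀ n, x (n + 2) * (x (n + 3) + x (n + 2) + x (n + 1))
          = x (n + 1) * (x (n + 2) + x (n + 1) + x n) ∧
        (x (n + 3) + x (n + 2)) * x (n + 2) * (x (n + 2) + x (n + 1))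
          = (x (n + 2) + x (n + 1)) * x (n + 1) * (x (n + 1) + x n) := by
  intro n
  have hn := h n
  exact ⟨by linear_combination hn, by linear_combination (x (n + 2) + x (n + 1)) * hn⟩
end

section
/- Let K be a field and (x, y, z) ∈ K³ with xz + y ≠ 0. Define y' = (xyz + x² + z² − 1)/(xz + y) and z' = (x − x³ + xy² + yz)/(xz + y). Then x·y' + z' = xy + z, and if moreover x·z' + y' ≠ 0 then (y'·z' + x)/(x·z' + y') = (yz + x)/(xz + y). -/
/-- In the finite-group example the map `R₁` preserves both invariants
`I = xy + z` and `J = (yz + x)/(xz + y)`. -/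
theorem stmt_13 {K : Type*} [Field K] (x y z : K) (h : x * z + y ≠ 0) :
    let y' := (x * y * z + x ^ 2 + z ^ 2 - 1) / (x * z + y)
    let z' := (x - x ^ 3 + x * y ^ 2 + y * z) / (x * z + y)
    x * y' + z' = x * y + z ∧
    (x * z' + y' ≠ 0 →
      (y' * z' + x) / (x * z' + y') = (y * z + x) / (x * z + y)) := by
  intro y' z'
  constructor
  · simp only [y', z']
    field_simp
    ring
  · intro h2
    simp only [y', z'] at h2 ⊢
    rw [div_eq_div_iff h2 h]
    field_simp at h2 ⊢
    ring
end

section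
/- Let K be a field and (x, y, z) ∈ K³ with xz + y ≠ 0. Define y' = (xyz + x² + z² − 1)/(xz + y) and z' = (x − x³ + xy² + yz)/(xz + y), and assume x·z' + y' ≠ 0. Then (x·y'·z' + x² + z'² − 1)/(x·z' + y') = y and (x − x³ + x·y'² + y'·z')/(x·z' + y') = z; that is, applying the map R₁ twice returns the original point. -/
/-- In the finite-group example the map `R₁` is an involution on its domain
of definition. -/
theorem stmt_14 {K : Type*} [Field K] (x y z : K) (h : x * z + y ≠ 0) :
    let y' := (x * y * z + x ^ 2 + z ^ 2 - 1) / (x * z + y)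
    let z' := (x - x ^ 3 + x * y ^ 2 + y * z) / (x * z + y)
    x * z' + y' ≠ 0 →
    (x * y' * z' + x ^ 2 + z' ^ 2 - 1) / (x * z' + y') = y ∧
    (x - x ^ 3 + x * y' ^ 2 + y' * z') / (x * z' + y') = z := by
  intro y' z' h2
  simp only [y', z'] at h2 ⊢
  constructor <;> (rw [div_eq_iff h2]; field_simp; ring)
end

section
/- Let K be a field and (x, y, z) ∈ K³ with yz + x ≠ 0. Define x' = (xyz + y² + z² − 1)/(yz + x) and z' = (y − y³ + yx² + xz)/(yz + x). Then x'·y + z' = xy + z; if y·z' + x' ≠ 0 then (y·z' + x')/(x'·z' + y) = (yz + x)/(xz + y), and moreover (x'·y·z' + y² + z'² − 1)/(y·z' + x') = x and (y − y³ + y·x'² + x'·z')/(y·z' + x') = z, i.e. R₂ is an involution. -/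
/-- In the finite-group example the map `R₂` preserves both invariants
`I = xy + z`, `J = (yz + x)/(xz + y)` and is an involution on its domain
of definition. -/
theorem stmt_15 {K : Type*} [Field K] (x y z : K) (h : y * z + x ≠ 0) :
    let x' := (x * y * z + y ^ 2 + z ^ 2 - 1) / (y * z + x)
    let z' := (y - y ^ 3 + y * x ^ 2 + x * z) / (y * z + x)
    x' * y + z' = x * y + z ∧
    (y * z' + x' ≠ 0 →
      (y * z' + x') / (x' * z' + y) = (y * z + x) / (x * z + y) ∧
      (x' * y * z' + y ^ 2 + z' ^ 2 - 1) / (y * z' + x') = x ∧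
      (y - y ^ 3 + y * x' ^ 2 + x' * z') / (y * z' + x') = z) := by
  intro x' z'
  have hx' : x' = (x * y * z + y ^ 2 + z ^ 2 - 1) / (y * z + x) := rfl
  have hz' : z' = (y - y ^ 3 + y * x ^ 2 + x * z) / (y * z + x) := rfl
  have cross : (y * z' + x') * (x * z + y) = (x' * z' + y) * (y * z + x) := by
    rw [hx', hz']; field_simp; ring
  refine ⟨by rw [hx', hz']; field_simp; ring, fun h2 => ⟨?_, ?_, ?_⟩⟩
  · by_cases hy : x * z + y = 0
    · have : (x' * z' + y) * (y * z + x) = 0 := by rw [← cross, hy]; ring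
      have h3 : x' * z' + y = 0 := by
        rcases mul_eq_zero.mp this with h' | h'
        · exact h'
        · exact absurd h' h
      rw [hy, h3, div_zero, div_zero]
    · have h3 : x' * z' + y ≠ 0 := by
        intro h'
        apply h2
        have := cross
        rw [h'] at this
        rcases mul_eq_zero.mp (by linear_combination this : (y * z' + x') * (x * z + y) = 0) with h'' | h''
        · exact h''
        · exact absurd h'' hy
      rw [div_eq_div_iff h3 hy]
      linear_combination cross
  · rw [div_eq_iff h2, hx', hz']; field_simp; ring
  · rw [div_eq_iff h2, hx', hz']; field_simp; ring
end

section
/- Let K be a field and x, y, z, y₁, z₁ ∈ K with z ≠ 0 and xy + z ≠ 0. If y₁·z = y·z₁ and x(y₁ − y) = z − z₁, then y₁ = y and z₁ = z. -/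
/-- In the example with invariants `I = xy + z`, `J = xz/(y + z)`, the
defining system for `R₁` has only the identical solution. -/
theorem stmt_17 {K : Type*} [Field K] (x y z y1 z1 : K)
    (hz : z ≠ 0) (hI : x * y + z ≠ 0)
    (h1 : y1 * z = y * z1) (h2 : x * (y1 - y) = z - z1) :
    y1 = y ∧ z1 = z := by
  have key : (z1 - z) * (x * y + z) = 0 := by
    have h2' : x * (y1 - y) * z = (z - z1) * z := by rw [h2]
    linear_combination h2' - x * h1
  have hz1 : z1 = z := by
    rcases mul_eq_zero.mp key with h | h
    · exact sub_eq_zero.mp h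
    · exact absurd h hI
  subst hz1
  refine ⟨?_, rfl⟩
  have := mul_right_cancel₀ hz h1
  exact this
end

section
/- Let K be a field and (x, y, z) ∈ K³ with y + z ≠ 0. Define T₁(x, y, z) = (z(x − 1)/(y + z), −y − z, x(y + z)) = (x', y', z'). Then x'·y' + z' = xy + z, and if moreover x ≠ 1 then x'·z'/(y' + z') = xz/(y + z). -/
/-- The map `T₁(x,y,z) = (z(x-1)/(y+z), -y-z, x(y+z))` preserves the
invariants `I = xy + z` and `J = xz/(y + z)`. -/
theorem stmt_18 {K : Type*} [Field K] (x y z : K) (h : y + z ≠ 0) :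
    let x' := z * (x - 1) / (y + z)
    let y' := -y - z
    let z' := x * (y + z)
    x' * y' + z' = x * y + z ∧
    (x ≠ 1 → x' * z' / (y' + z') = x * z / (y + z)) := by
  refine ⟨?_, fun hx => ?_⟩
  · field_simp
    ring
  · have hx1 : x - 1 ≠ 0 := sub_ne_zero.mpr hx
    have h2 : -y - z + x * (y + z) = (y + z) * (x - 1) := by ring
    rw [h2]
    field_simp
end

section
/- Let K be a field and I, J, x ∈ K with x ≠ 0, I ≠ 0 and x² − Jx + J ≠ 0. Define y = I(x − J)/(x² − Jx + J) and z = IJ/(x² − Jx + J). Then xy + z = I and xz/(y + z) = J. -/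
section CurveParametrization

variable {K : Type*} [Field K] (I J x : K)

theorem curveParam_y_add_z :
    I * (x - J) / (x ^ 2 - J * x + J) + I * J / (x ^ 2 - J * x + J) =
      I * x / (x ^ 2 - J * x + J) := by
  rw [← add_div]
  ring

theorem curveParam_invariant_I (hd : x ^ 2 - J * x + J ≠ 0) :
    x * (I * (x - J) / (x ^ 2 - J * x + J)) + I * J / (x ^ 2 - J * x + J) = I := by
  rw [mul_div_assoc', ← add_div, div_eq_iff hd]
  ring

theorem curveParam_invariant_J (hx : x ≠ 0) (hI : I ≠ 0) (hd : x ^ 2 - J * x + J ≠ 0) :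
    x * (I * J / (x ^ 2 - J * x + J)) / (I * x / (x ^ 2 - J * x + J)) = J := by
  rw [mul_div_assoc', div_div_div_cancel_right₀ hd, div_eq_iff (mul_ne_zero hI hx)]
  ring

end CurveParametrization

/-- Explicit rational parametrization of the invariant curve
`{xy + z = I, xz/(y+z) = J}`. -/
theorem stmt_19 {K : Type*} [Field K] (I J x : K)
    (hx : x ≠ 0) (hI : I ≠ 0) (hd : x ^ 2 - J * x + J ≠ 0) :
    let y := I * (x - J) / (x ^ 2 - J * x + J)
    let z := I * J / (x ^ 2 - J * x + J)
    x * y + z = I ∧ x * z / (y + z) = J := by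
  intro y z
  refine ⟨curveParam_invariant_I I J x hd, ?_⟩
  rw [curveParam_y_add_z]
  exact curveParam_invariant_J I J x hx hI hd
end
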